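/- arXiv:0910.4401 — 2 statements merged into one kernel-verified Lean document; each statement's English description precedes it below -/
import Mathlib

section
/- In X_wh, for every sequence (x_k)_{k=1}^d of disjointly supported vectors with d ≤ min supp(x_i) for each i ≤ d, one has (1/2)(∑_{k=1}^d ‖x_k‖^2)^{1/2} ≤ ‖∑_{k=1}^d x_k‖. Combined with the upper ℓ_2 estimate, the basis of X_wh is asymptotic ℓ_2 for vectors with disjoint supports with constant 2. -/
/-- The first Schreier family: finite sets `F` with `|F| ≤ min F`. -/
def SchreierOne : Set (Finset ℕ) := {F | ∀ k ∈ F, F.card ≤ k}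

/-- The minimum of a finite set of naturals (0 for the empty set). -/
noncomputable def finMin (F : Finset ℕ) : ℕ := sInf {k | k ∈ F}

/-- The convolution `P[Q]` of two families of finite subsets of ℕ:
unions of successive members of `Q` whose minima form a set in `P`. -/
def conv (P Q : Set (Finset ℕ)) : Set (Finset ℕ) :=
  {U | ∃ (d : ℕ) (F : Fin d → Finset ℕ),
    (∀ i, F i ∈ Q) ∧ (∀ i, (F i).Nonempty) ∧
    (∀ i j : Fin d, i < j → ∀ a ∈ F i, ∀ b ∈ F j, a < b) ∧
    (Finset.univ.image fun i => finMin (F i)) ∈ P ∧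
    U = Finset.univ.biUnion F}

/-- The modified convolution `P[Q]_M`: unions of pairwise disjoint members of `Q`
whose minima form a set in `P`. -/
def mconv (P Q : Set (Finset ℕ)) : Set (Finset ℕ) :=
  {U | ∃ (d : ℕ) (F : Fin d → Finset ℕ),
    (∀ i, F i ∈ Q) ∧ (∀ i, (F i).Nonempty) ∧
    (∀ i j : Fin d, i ≠ j → Disjoint (F i) (F j)) ∧
    (Finset.univ.image fun i => finMin (F i)) ∈ P ∧
    U = Finset.univ.biUnion F}

/-- The Schreier families `S_n` (indexed so that `Schreier 1 = S_1`,
`Schreier (n+1) = S_1[S_n]`). -/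
def Schreier : ℕ → Set (Finset ℕ)
  | 0 => {F | F.card ≤ 1}
  | 1 => SchreierOne
  | (n+2) => conv SchreierOne (Schreier (n+1))

/-- The modified Schreier families `S^M_n`. -/
def SchreierM : ℕ → Set (Finset ℕ)
  | 0 => {F | F.card ≤ 1}
  | 1 => SchreierOne
  | (n+2) => mconv SchreierOne (SchreierM (n+1))

/-- The sequence `m_j`: `m_0 = m_1 = 2`, `m_{j+1} = m_j^3`. -/
def mseq : ℕ → ℕ
  | 0 => 2
  | 1 => 2
  | (j+2) => (mseq (j+1)) ^ 3

/-- `ℓ_j = 3 log_2 m_j + 1`. -/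
def lseq (j : ℕ) : ℕ := 3 * Nat.log 2 (mseq j) + 1

/-- The sequence `n_j`: `n_0 = 1` and `n_{j+1} > ℓ_{j+1}(n_j + 1)`. -/
def nseq : ℕ → ℕ
  | 0 => 1
  | (j+1) => lseq (j+1) * (nseq j + 1) + 1

/-- The minimum of the support of an element of `c_00` (0 if empty). -/
noncomputable def minsupp (f : ℕ →₀ ℝ) : ℕ := sInf {k | f k ≠ 0}

/-- The maximum of the support of an element of `c_00` (0 if empty). -/
noncomputable def maxsupp (f : ℕ →₀ ℝ) : ℕ := sSup {k | f k ≠ 0}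

/-- Membership in the set `Σ` of candidate special sequences: a nonempty finite list of
pairs `(E_i, j_i)` with the `E_i` pairwise disjoint nonempty finite sets, the `j_i`
strictly increasing, `j_1 ∈ N_1` and `j_i ∈ N_2` for `i > 1`. -/
def InSigma (N1 N2 : Set ℕ) (l : List (Finset ℕ × ℕ)) : Prop :=
  l ≠ [] ∧
  l.Pairwise (fun a b => Disjoint a.1 b.1) ∧
  l.Chain' (fun a b => a.2 < b.2) ∧
  (∀ a ∈ l.head?, a.2 ∈ N1) ∧
  (∀ a ∈ l.tail, a.2 ∈ N2) ∧
  (∀ a ∈ l, a.1.Nonempty)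

/-- `l` is a `σ`-special sequence: it lies in `Σ` and `σ` of each proper initial
segment gives the next index. -/
def IsSpecial (N1 N2 : Set ℕ) (σ : List (Finset ℕ × ℕ) → ℕ)
    (l : List (Finset ℕ × ℕ)) : Prop :=
  InSigma N1 N2 l ∧
  ∀ (i : ℕ) (h : i + 1 < l.length), σ (l.take (i + 1)) = (l.get ⟨i + 1, h⟩).2

/-- `σ` is an admissible coding: it maps `Σ` into `N_2`, is injective on `Σ`, its values
dominate the indices appearing in the sequence, and it satisfies the growth condition
`m_{2σ(s⌢(E,j))} > m_{2σ(s)}·(max E_last)^2`. -/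
def GoodCoding (N1 N2 : Set ℕ) (σ : List (Finset ℕ × ℕ) → ℕ) : Prop :=
  (∀ l, InSigma N1 N2 l → σ l ∈ N2) ∧
  (∀ l l', InSigma N1 N2 l → InSigma N1 N2 l' → σ l = σ l' → l = l') ∧
  (∀ l, InSigma N1 N2 l → ∀ a ∈ l, a.2 < σ l) ∧
  (∀ (l : List (Finset ℕ × ℕ)) (a : Finset ℕ × ℕ) (h : l ≠ []),
      InSigma N1 N2 l → InSigma N1 N2 (l ++ [a]) →
      mseq (2 * σ l) * (sSup {k | k ∈ (l.getLast h).1}) ^ 2 < mseq (2 * σ (l ++ [a])))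

/-- The norming set `D_wh` of the space `X_wh`, together with weights: the minimal set of
finitely supported functionals containing `±e_k^*` and closed under the modified
`ℓ_2-(1/m_{2j}, S_{n_{2j}})` operations (even case) and under the `ℓ_2` operations on
`S_{n_{2j+1}}` `σ`-special sequences of functionals (odd case). -/
inductive DW (N1 N2 : Set ℕ) (σ : List (Finset ℕ × ℕ) → ℕ) : (ℕ →₀ ℝ) → ℕ → Prop where
  | pos (k : ℕ) : DW N1 N2 σ (Finsupp.single k 1) 0
  | neg (k : ℕ) : DW N1 N2 σ (Finsupp.single k (-1)) 0
  | even (j p : ℕ) (f : Fin p → ℕ →₀ ℝ) (w : Fin p → ℕ) (lam : Fin p → ℝ)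
      (hmem : ∀ i, DW N1 N2 σ (f i) (w i))
      (hdisj : ∀ i i', i ≠ i' → Disjoint (f i).support (f i').support)
      (hallow : (Finset.univ.image fun i => minsupp (f i)) ∈ SchreierM (nseq (2 * j)))
      (hlam : (∑ i, (lam i) ^ 2) ≤ 1) :
      DW N1 N2 σ (((mseq (2 * j) : ℕ) : ℝ)⁻¹ • ∑ i, lam i • f i) (mseq (2 * j))
  | odd (j p : ℕ) (f : Fin p → ℕ →₀ ℝ) (E : Fin p → Finset ℕ) (js : Fin p → ℕ)
      (lam : Fin p → ℝ)
      (hmem : ∀ i, DW N1 N2 σ (f i) (mseq (2 * js i)))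
      (hsupp : ∀ i, (f i).support ⊆ E i)
      (hspec : IsSpecial N1 N2 σ (List.ofFn fun i => (E i, js i)))
      (hallow : (Finset.univ.image fun i => finMin (E i)) ∈ SchreierM (nseq (2 * j + 1)))
      (hbig : ∀ i, 2 * j + 2 < 2 * js i)
      (hlam : (∑ i, (lam i) ^ 2) ≤ 1) :
      DW N1 N2 σ (((mseq (2 * j + 1) : ℕ) : ℝ)⁻¹ • ∑ i, lam i • f i) (mseq (2 * j + 1))

/-- Membership in the norming set `D_wh` (forgetting the weight). -/
def DWh (N1 N2 : Set ℕ) (σ : List (Finset ℕ × ℕ) → ℕ) (f : ℕ →₀ ℝ) : Prop :=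
  ∃ w, DW N1 N2 σ f w

/-- The action of a finitely supported functional on an element of `c_00`. -/
def dotp (f x : ℕ →₀ ℝ) : ℝ := f.sum fun k v => v * x k

/-- The norm of `X_wh` on `c_00`: `‖x‖ = sup {f(x) : f ∈ D_wh}`. -/
noncomputable def wnorm (N1 N2 : Set ℕ) (σ : List (Finset ℕ × ℕ) → ℕ)
    (x : ℕ →₀ ℝ) : ℝ :=
  sSup {r | ∃ f, DWh N1 N2 σ f ∧ r = dotp f x}

/-!
Upper estimate: by induction on `D_wh`, the restrictions of a norming functional `f` to
disjoint sets `E_k` are `μ_k g_k` with `g_k ∈ D_wh ∪ {0}` and `∑ μ_k² ≤ 1`; for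
`f = m⁻¹ ∑ λ_i f_i` the weights are `μ_k = (∑_i λ_i² μ_{ik}²)^{1/2}`, and the restricted pieces
stay admissible because the modified Schreier families are spreading and hereditary. Pairing
with `E_k = supp x_k` and Cauchy–Schwarz give `‖∑ x_k‖ ≤ (∑ ‖x_k‖²)^{1/2}`.

Lower estimate: restrict almost norming functionals `g_k` of `x_k` to `supp x_k`. At most `d`
of them are nonzero and all start after `d`, so `½ ∑ (a_k / ‖a‖₂) g_k` is an
`ℓ_2-(1/m_0, S_{n_0})` combination (`m_0 = 2`, `S_{n_0} = S_1`); its value at `∑ x_k` is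
`‖a‖₂ / 2` with `a_k ≈ ‖x_k‖`.
-/

open Finset Function

lemma dotp_eq_linearCombination (f x : ℕ →₀ ℝ) :
    dotp f x = Finsupp.linearCombination ℝ x f := rfl

@[simp]
lemma dotp_zero_left (x : ℕ →₀ ℝ) : dotp 0 x = 0 := by
  simp [dotp_eq_linearCombination]

@[simp]
lemma dotp_smul_left (c : ℝ) (f x : ℕ →₀ ℝ) : dotp (c • f) x = c * dotp f x := by
  simp [dotp_eq_linearCombination]

@[simp]
lemma dotp_sum_left {ι : Type*} (s : Finset ι) (g : ι → ℕ →₀ ℝ) (x : ℕ →₀ ℝ) :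
    dotp (∑ i ∈ s, g i) x = ∑ i ∈ s, dotp (g i) x := by
  simp [dotp_eq_linearCombination]

lemma dotp_sum_right {ι : Type*} (f : ℕ →₀ ℝ) (s : Finset ι) (y : ι → ℕ →₀ ℝ) :
    dotp f (∑ k ∈ s, y k) = ∑ k ∈ s, dotp f (y k) := by
  simp only [dotp, Finsupp.sum, Finsupp.coe_finsetSum, Finset.sum_apply, Finset.mul_sum]
  exact Finset.sum_comm

lemma dotp_single (n : ℕ) (c : ℝ) (x : ℕ →₀ ℝ) : dotp (Finsupp.single n c) x = c * x n :=
  Finsupp.sum_single_index (zero_mul _)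

lemma dotp_eq_sum_support_right (f x : ℕ →₀ ℝ) :
    dotp f x = ∑ n ∈ x.support, f n * x n := by
  rw [dotp, Finsupp.sum_of_support_subset f subset_union_left (fun n v => v * x n)
    fun _ _ => zero_mul _]
  exact (sum_subset subset_union_right fun n _ hn => by
    rw [Finsupp.notMem_support_iff.1 hn, mul_zero]).symm

lemma dotp_filter_of_support_subset (f : ℕ →₀ ℝ) {x : ℕ →₀ ℝ} {E : Finset ℕ}
    (hx : x.support ⊆ E) : dotp (f.filter (· ∈ E)) x = dotp f x := by
  simp only [dotp_eq_sum_support_right]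
  exact sum_congr rfl fun n hn => by rw [Finsupp.filter_apply_pos _ _ (hx hn)]

lemma dotp_eq_zero_of_disjoint {f x : ℕ →₀ ℝ} (h : Disjoint f.support x.support) :
    dotp f x = 0 := by
  rw [dotp_eq_sum_support_right]
  exact sum_eq_zero fun n hn => by
    rw [Finsupp.notMem_support_iff.1 (disjoint_right.1 h hn), zero_mul]

lemma minsupp_mem {f : ℕ →₀ ℝ} (hf : f ≠ 0) : minsupp f ∈ f.support := by
  obtain ⟨k, hk⟩ := Finsupp.support_nonempty_iff.2 hf
  simpa [minsupp] using Nat.sInf_mem (s := {k | f k ≠ 0}) ⟨k, by simpa using hk⟩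

lemma minsupp_le {f : ℕ →₀ ℝ} {k : ℕ} (hk : k ∈ f.support) : minsupp f ≤ k :=
  Nat.sInf_le (by simpa using hk)

lemma finMin_mem {F : Finset ℕ} (hF : F.Nonempty) : finMin F ∈ F :=
  Nat.sInf_mem (s := {k | k ∈ F}) hF

lemma finMin_le {F : Finset ℕ} {k : ℕ} (hk : k ∈ F) : finMin F ≤ k := Nat.sInf_le hk

/-- Spreading and hereditary in one condition: `B` is admissible as soon as it injects into an
admissible `A` by a map that moves every element down. -/
def IsSpreading (S : Set (Finset ℕ)) : Prop :=
  ∀ A ∈ S, ∀ (B : Finset ℕ) (φ : ℕ → ℕ), Set.InjOn φ B → (∀ b ∈ B, φ b ∈ A ∧ φ b ≤ b) → B ∈ S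

lemma IsSpreading.image_mem {S : Set (Finset ℕ)} (hS : IsSpreading S) {A : Finset ℕ}
    (hA : A ∈ S) {ι : Type*} {s : Finset ι} {a b : ι → ℕ} (ha : Set.InjOn a s)
    (haA : ∀ i ∈ s, a i ∈ A) (hab : ∀ i ∈ s, a i ≤ b i) : s.image b ∈ S := by
  rcases s.eq_empty_or_nonempty with rfl | ⟨i₀, -⟩
  · exact hS A hA _ id (by simp) (by simp)
  have : Nonempty ι := ⟨i₀⟩
  have hinv : ∀ i ∈ s, invFunOn b s (b i) ∈ s ∧ b (invFunOn b s (b i)) = b i :=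
    fun i hi => invFunOn_pos ⟨i, hi, rfl⟩
  refine hS A hA _ (a ∘ invFunOn b s) ?_ ?_
  · simp only [Set.InjOn, coe_image, Set.forall_mem_image]
    intro i hi i' hi' h
    rw [← (hinv i hi).2, ← (hinv i' hi').2, ha (hinv i hi).1 (hinv i' hi').1 h]
  · simp only [mem_image, forall_exists_index, and_imp]
    rintro _ i hi rfl
    exact ⟨haA _ (hinv i hi).1, (hab _ (hinv i hi).1).trans_eq (hinv i hi).2⟩

lemma isSpreading_card_le_one : IsSpreading {F | F.card ≤ 1} :=
  fun _ hA _ φ hφ hB => (card_le_card_of_injOn φ (fun b hb => (hB b hb).1) hφ).trans hA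

lemma isSpreading_schreierOne : IsSpreading SchreierOne := fun A hA B φ hφ hB k hk =>
  calc B.card ≤ A.card := card_le_card_of_injOn φ (fun b hb => (hB b hb).1) hφ
    _ ≤ φ k := hA _ (hB k hk).1
    _ ≤ k := (hB k hk).2

lemma sum_equivFin_symm {ι M : Type*} [AddCommMonoid M] (s : Finset ι) (F : ι → M) :
    ∑ i, F (s.equivFin.symm i) = ∑ i ∈ s, F i := by
  rw [← s.sum_coe_sort, s.equivFin.symm.sum_comp (fun i : s => F i)]

lemma image_equivFin_symm {ι β : Type*} [DecidableEq β] (s : Finset ι) (b : ι → β) :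
    univ.image (fun i => b (s.equivFin.symm i)) = s.image b := by
  ext m
  simp only [mem_image, mem_univ, true_and]
  exact ⟨fun ⟨i, hi⟩ => ⟨_, (s.equivFin.symm i).2, hi⟩,
    fun ⟨i, hi, him⟩ => ⟨s.equivFin ⟨i, hi⟩, by simpa⟩⟩

lemma mem_mconv_of_finset {P Q : Set (Finset ℕ)} {ι : Type*} (s : Finset ι) (G : ι → Finset ℕ)
    (hQ : ∀ i ∈ s, G i ∈ Q) (hne : ∀ i ∈ s, (G i).Nonempty)
    (hdisj : (s : Set ι).PairwiseDisjoint G) (hP : s.image (finMin ∘ G) ∈ P) :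
    s.biUnion G ∈ mconv P Q := by
  set e := s.equivFin.symm
  refine ⟨s.card, fun i => G (e i), fun i => hQ _ (e i).2, fun i => hne _ (e i).2,
    fun i j hij => hdisj (e i).2 (e j).2 (by simpa [Subtype.ext_iff] using hij), ?_, ?_⟩
  · exact image_equivFin_symm s (finMin ∘ G) ▸ hP
  · ext m
    simp only [mem_biUnion, mem_univ, true_and]
    exact ⟨fun ⟨i, hi, hm⟩ => ⟨e.symm ⟨i, hi⟩, by simpa⟩, fun ⟨i, hm⟩ => ⟨e i, (e i).2, hm⟩⟩

lemma IsSpreading.mconv {P Q : Set (Finset ℕ)} (hP : IsSpreading P) (hQ : IsSpreading Q) :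
    IsSpreading (mconv P Q) := by
  rintro _ ⟨d, F, hFQ, hFne, hFdisj, hFP, rfl⟩ B φ hφ hB
  set G : Fin d → Finset ℕ := fun i => B.filter (φ · ∈ F i)
  have hGF : ∀ i, ∀ b ∈ G i, φ b ∈ F i ∧ φ b ≤ b := fun i b hb =>
    ⟨(mem_filter.1 hb).2, (hB b (mem_filter.1 hb).1).2⟩
  have hB_eq : B = (univ.filter fun i => (G i).Nonempty).biUnion G := by
    ext b
    simp only [mem_biUnion, mem_filter, mem_univ, true_and, G]
    refine ⟨fun hb => ?_, fun ⟨_, _, hb, _⟩ => hb⟩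
    obtain ⟨i, -, hi⟩ := mem_biUnion.1 (hB b hb).1
    exact ⟨i, ⟨b, mem_filter.2 ⟨hb, hi⟩⟩, hb, hi⟩
  rw [hB_eq]
  refine mem_mconv_of_finset _ G (fun i _ => hQ _ (hFQ i) _ φ (hφ.mono (filter_subset _ _)) (hGF i))
    (fun i hi => (mem_filter.1 hi).2) (fun i _ j _ hij => ?_) ?_
  · exact disjoint_left.2 fun b hbi hbj =>
      disjoint_left.1 (hFdisj i j hij) (hGF i b hbi).1 (hGF j b hbj).1
  · refine hP.image_mem hFP (a := fun i => finMin (F i)) (fun i _ j _ hij => ?_)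
      (fun i _ => mem_image_of_mem _ (mem_univ i)) (fun i hi => ?_)
    · by_contra hne
      refine disjoint_left.1 (hFdisj i j hne) (finMin_mem (hFne i)) ?_
      rw [show finMin (F i) = finMin (F j) from hij]
      exact finMin_mem (hFne j)
    · have hmin := hGF i _ (finMin_mem (mem_filter.1 hi).2)
      exact (finMin_le hmin.1).trans hmin.2

lemma isSpreading_schreierM : ∀ n, IsSpreading (SchreierM n)
  | 0 => isSpreading_card_le_one
  | 1 => isSpreading_schreierOne
  | n + 2 => isSpreading_schreierOne.mconv (isSpreading_schreierM (n + 1))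

lemma empty_mem_schreierM : ∀ n, (∅ : Finset ℕ) ∈ SchreierM n
  | 0 => by simp [SchreierM]
  | 1 => by simp [SchreierM, SchreierOne]
  | n + 2 => ⟨0, Fin.elim0, (·.elim0), (·.elim0), fun i => i.elim0,
      by simp [SchreierOne], by simp⟩

lemma IsSpecial.pairwise_disjoint {N1 N2 : Set ℕ} {σ : List (Finset ℕ × ℕ) → ℕ} {p : ℕ}
    {E : Fin p → Finset ℕ} {js : Fin p → ℕ}
    (h : IsSpecial N1 N2 σ (List.ofFn fun i => (E i, js i))) : Pairwise (Disjoint on E) := by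
  have hE := List.pairwise_ofFn.1 h.1.2.1
  intro i j hij
  rcases hij.lt_or_gt with hlt | hgt
  exacts [hE hlt, (hE hgt).symm]

lemma abs_smul_sum_apply_le_one {ι : Type*} [Fintype ι] {a : ℝ} (ha : |a| ≤ 1) {c : ι → ℝ}
    (hc : ∑ i, c i ^ 2 ≤ 1) {f : ι → ℕ →₀ ℝ}
    (hdisj : Pairwise (Disjoint on fun i => (f i).support)) (hf : ∀ i n, |f i n| ≤ 1) (n : ℕ) :
    |(a • ∑ i, c i • f i) n| ≤ 1 := by
  simp only [Finsupp.smul_apply, Finsupp.finsetSum_apply, smul_eq_mul]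
  by_cases hn : ∀ i, f i n = 0
  · simp [hn]
  · obtain ⟨i, hi⟩ := not_forall.1 hn
    have hci : |c i| ≤ 1 := sq_le_one_iff_abs_le_one _ |>.1 <|
      (single_le_sum (fun i _ => sq_nonneg (c i)) (mem_univ i)).trans hc
    rw [sum_eq_single i (fun i' _ hi' => ?_) (by simp), abs_mul, abs_mul]
    · exact mul_le_one₀ ha (by positivity) (mul_le_one₀ hci (abs_nonneg _) (hf i n))
    · rw [Finsupp.notMem_support_iff.1 fun h' =>
        disjoint_left.1 (hdisj hi') h' (Finsupp.mem_support_iff.2 hi), mul_zero]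

namespace DW

variable {N1 N2 : Set ℕ} {σ : List (Finset ℕ × ℕ) → ℕ}

lemma abs_apply_le_one {f : ℕ →₀ ℝ} {w : ℕ} (hf : DW N1 N2 σ f w) (n : ℕ) : |f n| ≤ 1 := by
  induction hf generalizing n with
  | pos k | neg k => rw [Finsupp.single_apply]; split <;> simp
  | even j p f w lam hmem hdisj hallow hlam ih =>
    exact abs_smul_sum_apply_le_one (by simpa using Nat.cast_inv_le_one _) hlam
      (fun i i' => hdisj i i') ih n
  | odd j p f E js lam hmem hsupp hspec hallow hbig hlam ih =>
    exact abs_smul_sum_apply_le_one (by simpa using Nat.cast_inv_le_one _) hlam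
      (fun i i' hii' => (hspec.pairwise_disjoint hii').mono (hsupp i) (hsupp i')) ih n

lemma zero (j : ℕ) : DW N1 N2 σ 0 (mseq (2 * j)) := by
  simpa using DW.even (N1 := N1) (N2 := N2) (σ := σ) j 0 Fin.elim0 Fin.elim0 Fin.elim0
    (·.elim0) (fun i => i.elim0) (by simpa using empty_mem_schreierM _) (by simp)

lemma of_eq_zero_or {g : ℕ →₀ ℝ} {j : ℕ} (h : g = 0 ∨ DW N1 N2 σ g (mseq (2 * j))) :
    DW N1 N2 σ g (mseq (2 * j)) :=
  h.elim (· ▸ zero j) id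

lemma even_of_finset {ι : Type*} (j : ℕ) (s : Finset ι) (g : ι → ℕ →₀ ℝ) (w : ι → ℕ)
    (c : ι → ℝ) (hg : ∀ i ∈ s, DW N1 N2 σ (g i) (w i))
    (hdisj : (s : Set ι).PairwiseDisjoint fun i => (g i).support)
    (hallow : s.image (fun i => minsupp (g i)) ∈ SchreierM (nseq (2 * j)))
    (hc : ∑ i ∈ s, c i ^ 2 ≤ 1) :
    DW N1 N2 σ (((mseq (2 * j) : ℕ) : ℝ)⁻¹ • ∑ i ∈ s, c i • g i) (mseq (2 * j)) := by
  set e := s.equivFin.symm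
  convert DW.even j s.card (fun i => g (e i)) (fun i => w (e i)) (fun i => c (e i))
    (fun i => hg _ (e i).2)
    (fun i i' hii' => hdisj (e i).2 (e i').2 (by simpa [Subtype.ext_iff] using hii')) ?_ ?_
    using 2
  · exact (sum_equivFin_symm s fun i => c i • g i).symm
  · exact image_equivFin_symm s (fun i => minsupp (g i)) ▸ hallow
  · rwa [sum_equivFin_symm s fun i => c i ^ 2]

lemma even_of_ne_zero {ι : Type*} [Fintype ι] (j : ℕ) {g : ι → ℕ →₀ ℝ} (c : ι → ℝ)
    (hg : ∀ i, g i = 0 ∨ DWh N1 N2 σ (g i))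
    (hdisj : Pairwise (Disjoint on fun i => (g i).support))
    (hallow : (univ.filter (g · ≠ 0)).image (fun i => minsupp (g i)) ∈ SchreierM (nseq (2 * j)))
    (hc : ∑ i, c i ^ 2 ≤ 1) :
    DW N1 N2 σ (((mseq (2 * j) : ℕ) : ℝ)⁻¹ • ∑ i, c i • g i) (mseq (2 * j)) := by
  have hw : ∀ i, ∃ w, g i ≠ 0 → DW N1 N2 σ (g i) w := fun i =>
    (hg i).elim (fun h0 => ⟨0, fun hne => absurd h0 hne⟩) fun ⟨w, hw⟩ => ⟨w, fun _ => hw⟩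
  choose w hw using hw
  rw [← sum_filter_of_ne (p := (g · ≠ 0)) fun i _ h h0 => h (by rw [h0, smul_zero])]
  exact even_of_finset j _ g w c (fun i hi => hw i (mem_filter.1 hi).2)
    (fun i _ i' _ hii' => hdisj hii') hallow
    ((sum_le_sum_of_subset_of_nonneg (filter_subset _ _) fun i _ _ => sq_nonneg _).trans hc)

lemma even_of_support_subset {ι : Type*} [Fintype ι] (j : ℕ) {f g : ι → ℕ →₀ ℝ} (c : ι → ℝ)
    (hdisj : Pairwise (Disjoint on fun i => (f i).support))
    (hallow : univ.image (fun i => minsupp (f i)) ∈ SchreierM (nseq (2 * j)))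
    (hg : ∀ i, g i = 0 ∨ DWh N1 N2 σ (g i)) (hgf : ∀ i, (g i).support ⊆ (f i).support)
    (hc : ∑ i, c i ^ 2 ≤ 1) :
    DW N1 N2 σ (((mseq (2 * j) : ℕ) : ℝ)⁻¹ • ∑ i, c i • g i) (mseq (2 * j)) := by
  have hf : ∀ i, g i ≠ 0 → minsupp (f i) ∈ (f i).support := fun i hi =>
    minsupp_mem fun h0 => hi (by simpa [h0] using hgf i)
  refine even_of_ne_zero j c hg (fun i i' hii' => (hdisj hii').mono (hgf i) (hgf i')) ?_ hc
  refine (isSpreading_schreierM _).image_mem hallow (a := fun i => minsupp (f i))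
    (fun i hi i' hi' hii' => ?_) (fun i _ => mem_image_of_mem _ (mem_univ i))
    (fun i hi => minsupp_le (hgf i (minsupp_mem (mem_filter.1 hi).2)))
  by_contra hne
  have hi := hf i (mem_filter.1 hi).2
  refine disjoint_left.1 (hdisj hne) hi ?_
  rw [show minsupp (f i) = minsupp (f i') from hii']
  exact hf i' (mem_filter.1 hi').2

lemma filter {f : ℕ →₀ ℝ} {w : ℕ} (hf : DW N1 N2 σ f w) (E : Finset ℕ) :
    f.filter (· ∈ E) = 0 ∨ DW N1 N2 σ (f.filter (· ∈ E)) w := by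
  induction hf with
  | pos n | neg n =>
    by_cases hn : n ∈ E
    · rw [Finsupp.filter_single_of_pos _ hn]
      first | exact .inr (.pos n) | exact .inr (.neg n)
    · exact .inl (Finsupp.filter_single_of_neg _ hn)
  | even j p f w lam hmem hdisj hallow hlam ih =>
    simp only [Finsupp.filter_smul, Finsupp.filter_sum]
    exact .inr <| even_of_support_subset j lam (fun i i' => hdisj i i') hallow
      (fun i => (ih i).imp_right (⟨_, ·⟩)) (fun i => filter_subset _ _) hlam
  | odd j p f E' js lam hmem hsupp hspec hallow hbig hlam ih =>
    simp only [Finsupp.filter_smul, Finsupp.filter_sum]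
    exact .inr <| .odd j p _ E' js lam (fun i => of_eq_zero_or (ih i))
      (fun i => (filter_subset _ _).trans (hsupp i))
      hspec hallow hbig hlam

end DW

section Norm

variable {N1 N2 : Set ℕ} {σ : List (Finset ℕ × ℕ) → ℕ}

lemma nonempty_dotp (x : ℕ →₀ ℝ) : {r | ∃ f, DWh N1 N2 σ f ∧ r = dotp f x}.Nonempty :=
  ⟨_, _, ⟨0, .pos 0⟩, rfl⟩

lemma bddAbove_dotp (x : ℕ →₀ ℝ) : BddAbove {r | ∃ f, DWh N1 N2 σ f ∧ r = dotp f x} := by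
  refine ⟨∑ n ∈ x.support, |x n|, ?_⟩
  rintro _ ⟨f, ⟨w, hf⟩, rfl⟩
  rw [dotp_eq_sum_support_right]
  refine sum_le_sum fun n _ => (le_abs_self _).trans ?_
  rw [abs_mul]
  exact mul_le_of_le_one_left (abs_nonneg _) (hf.abs_apply_le_one n)

lemma dotp_le_wnorm {f : ℕ →₀ ℝ} (hf : DWh N1 N2 σ f) (x : ℕ →₀ ℝ) :
    dotp f x ≤ wnorm N1 N2 σ x :=
  le_csSup (bddAbove_dotp x) ⟨f, hf, rfl⟩

lemma wnorm_nonneg (x : ℕ →₀ ℝ) : 0 ≤ wnorm N1 N2 σ x := by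
  have hpos := dotp_le_wnorm (N1 := N1) (N2 := N2) (σ := σ) ⟨0, .pos 0⟩ x
  have hneg := dotp_le_wnorm (N1 := N1) (N2 := N2) (σ := σ) ⟨0, .neg 0⟩ x
  rw [dotp_single] at hpos hneg
  rcases le_total 0 (x 0) with h | h <;> linarith

lemma dotp_le_wnorm_of_eq_zero_or {g : ℕ →₀ ℝ} (hg : g = 0 ∨ DWh N1 N2 σ g) (x : ℕ →₀ ℝ) :
    dotp g x ≤ wnorm N1 N2 σ x :=
  hg.elim (fun h => h ▸ (dotp_zero_left x).trans_le (wnorm_nonneg x)) (dotp_le_wnorm · x)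

end Norm

lemma smul_inv_smul_of_imp {V : Type*} [AddCommGroup V] [Module ℝ V] {μ : ℝ} {u : V}
    (h : μ = 0 → u = 0) : μ • μ⁻¹ • u = u := by
  rcases eq_or_ne μ 0 with hμ | hμ
  · simp [h hμ]
  · exact smul_inv_smul₀ hμ u

lemma sum_sq_inv_sqrt_mul_le_one {κ : Type*} (s : Finset κ) (a : κ → ℝ) :
    ∑ i ∈ s, ((√(∑ i ∈ s, a i ^ 2))⁻¹ * a i) ^ 2 ≤ 1 := by
  simp_rw [mul_pow, ← mul_sum, inv_pow, Real.sq_sqrt (sum_nonneg fun i _ => sq_nonneg (a i))]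
  rcases eq_or_ne (∑ i ∈ s, a i ^ 2) 0 with h | h
  · simp [h]
  · rw [inv_mul_cancel₀ h]

section Ell2Split

variable {ι : Type*} [Fintype ι] {E : ι → Finset ℕ}

/-- `f` restricted to `E k` is `μ k • g k`, where `g k := (μ k)⁻¹ • f|E k` satisfies `P`;
`filter_eq_zero` makes sure that nothing is lost through `0⁻¹ = 0`. -/
structure IsEll2Split (P : (ℕ →₀ ℝ) → Prop) (f : ℕ →₀ ℝ) (E : ι → Finset ℕ) (μ : ι → ℝ) :
    Prop where
  nonneg : ∀ k, 0 ≤ μ k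
  sum_sq_le_one : ∑ k, μ k ^ 2 ≤ 1
  filter_eq_zero : ∀ k, μ k = 0 → f.filter (· ∈ E k) = 0
  prop : ∀ k, P ((μ k)⁻¹ • f.filter (· ∈ E k))

lemma IsEll2Split.filter_eq_smul {P : (ℕ →₀ ℝ) → Prop} {f : ℕ →₀ ℝ} {μ : ι → ℝ}
    (h : IsEll2Split P f E μ) (k : ι) :
    f.filter (· ∈ E k) = μ k • (μ k)⁻¹ • f.filter (· ∈ E k) :=
  (smul_inv_smul_of_imp (h.filter_eq_zero k)).symm

lemma isEll2Split_single {P : (ℕ →₀ ℝ) → Prop} (hE : Pairwise (Disjoint on E)) (n : ℕ) (c : ℝ)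
    (h0 : P 0) (hP : P (Finsupp.single n c)) :
    IsEll2Split P (Finsupp.single n c) E fun k => if n ∈ E k then 1 else 0 where
  nonneg k := by split <;> norm_num
  sum_sq_le_one := by
    simp only [ite_pow, one_pow, ne_eq, OfNat.ofNat_ne_zero, not_false_eq_true, zero_pow,
      sum_boole]
    exact_mod_cast card_le_one.2 fun k hk k' hk' => by_contra fun hne =>
      disjoint_left.1 (hE hne) (mem_filter.1 hk).2 (mem_filter.1 hk').2
  filter_eq_zero k hk := Finsupp.filter_single_of_neg _ fun hn => by simp [hn] at hk
  prop k := by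
    by_cases hn : n ∈ E k
    · simpa [hn, Finsupp.filter_single_of_pos _ hn] using hP
    · simpa [hn] using h0

lemma IsEll2Split.smul_sum {κ : Type*} [Fintype κ] {P : κ → (ℕ →₀ ℝ) → Prop}
    {Q : (ℕ →₀ ℝ) → Prop} {f : κ → ℕ →₀ ℝ} {μ : κ → ι → ℝ}
    (h : ∀ i, IsEll2Split (P i) (f i) E (μ i)) (a : ℝ) {lam : κ → ℝ}
    (hlam : ∑ i, lam i ^ 2 ≤ 1)
    (hQ : ∀ (g : κ → ℕ →₀ ℝ) (c : κ → ℝ), (∀ i, P i (g i)) →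
      (∀ i, (g i).support ⊆ (f i).support) → ∑ i, c i ^ 2 ≤ 1 → Q (a • ∑ i, c i • g i)) :
    IsEll2Split Q (a • ∑ i, lam i • f i) E fun k => √(∑ i, (lam i * μ i k) ^ 2) where
  nonneg _ := Real.sqrt_nonneg _
  sum_sq_le_one := calc
    ∑ k, √(∑ i, (lam i * μ i k) ^ 2) ^ 2 = ∑ i, lam i ^ 2 * ∑ k, μ i k ^ 2 := by
      simp_rw [Real.sq_sqrt (sum_nonneg fun _ _ => sq_nonneg _), mul_pow, mul_sum]
      exact sum_comm
    _ ≤ ∑ i, lam i ^ 2 * 1 :=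
      sum_le_sum fun i _ => mul_le_mul_of_nonneg_left (h i).sum_sq_le_one (sq_nonneg _)
    _ ≤ 1 := by simpa using hlam
  filter_eq_zero k hk := by
    have hzero : ∀ i, lam i * μ i k = 0 := fun i => pow_eq_zero_iff two_ne_zero |>.1 <|
      (sum_eq_zero_iff_of_nonneg fun _ _ => sq_nonneg _).1
        ((Real.sqrt_eq_zero (sum_nonneg fun _ _ => sq_nonneg _)).1 hk) i (mem_univ i)
    rw [Finsupp.filter_smul, Finsupp.filter_sum, sum_eq_zero fun i _ => ?_, smul_zero]
    rcases mul_eq_zero.1 (hzero i) with h0 | h0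
    · rw [Finsupp.filter_smul, h0, zero_smul]
    · rw [Finsupp.filter_smul, (h i).filter_eq_zero k h0, smul_zero]
  prop k := by
    set t := √(∑ i, (lam i * μ i k) ^ 2)
    have heq : t⁻¹ • (a • ∑ i, lam i • f i).filter (· ∈ E k) =
        a • ∑ i, (t⁻¹ * (lam i * μ i k)) • (μ i k)⁻¹ • (f i).filter (· ∈ E k) := by
      rw [Finsupp.filter_smul, Finsupp.filter_sum, smul_comm, Finset.smul_sum]
      refine congrArg _ (sum_congr rfl fun i _ => ?_)
      rw [Finsupp.filter_smul, mul_smul, mul_smul, smul_inv_smul_of_imp ((h i).filter_eq_zero k)]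
    rw [heq]
    exact hQ _ _ (fun i => (h i).prop k)
      (fun i => Finsupp.support_smul.trans (filter_subset _ _)) (sum_sq_inv_sqrt_mul_le_one _ _)

theorem DW.exists_isEll2Split {N1 N2 : Set ℕ} {σ : List (Finset ℕ × ℕ) → ℕ} {f : ℕ →₀ ℝ}
    {w : ℕ} (hf : DW N1 N2 σ f w) (hE : Pairwise (Disjoint on E)) :
    ∃ μ, IsEll2Split (fun g => g = 0 ∨ DW N1 N2 σ g w) f E μ := by
  induction hf with
  | pos n => exact ⟨_, isEll2Split_single hE n 1 (.inl rfl) (.inr (.pos n))⟩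
  | neg n => exact ⟨_, isEll2Split_single hE n (-1) (.inl rfl) (.inr (.neg n))⟩
  | even j p f w lam hmem hdisj hallow hlam ih =>
    choose μ hμ using ih
    exact ⟨_, IsEll2Split.smul_sum hμ _ hlam fun g c hg hgf hc => .inr <|
      DW.even_of_support_subset j c (fun i i' => hdisj i i') hallow
        (fun i => (hg i).imp_right (⟨_, ·⟩)) hgf hc⟩
  | odd j p f E' js lam hmem hsupp hspec hallow hbig hlam ih =>
    choose μ hμ using ih
    exact ⟨_, IsEll2Split.smul_sum hμ _ hlam fun g c hg hgf hc => .inr <|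
      .odd j p g E' js c (fun i => DW.of_eq_zero_or (hg i)) (fun i => (hgf i).trans (hsupp i))
        hspec hallow hbig hc⟩

end Ell2Split

section Estimates

variable {N1 N2 : Set ℕ} {σ : List (Finset ℕ × ℕ) → ℕ}

theorem wnorm_sum_le_sqrt {ι : Type*} [Fintype ι] {x : ι → ℕ →₀ ℝ}
    (hx : Pairwise (Disjoint on fun k => (x k).support)) :
    wnorm N1 N2 σ (∑ k, x k) ≤ √(∑ k, wnorm N1 N2 σ (x k) ^ 2) := by
  refine csSup_le (nonempty_dotp _) ?_
  rintro _ ⟨f, ⟨w, hf⟩, rfl⟩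
  obtain ⟨μ, hμ⟩ := hf.exists_isEll2Split hx
  calc dotp f (∑ k, x k)
      = ∑ k, μ k * dotp ((μ k)⁻¹ • f.filter (· ∈ (x k).support)) (x k) := by
        rw [dotp_sum_right]
        refine sum_congr rfl fun k _ => ?_
        rw [← dotp_smul_left, ← hμ.filter_eq_smul, dotp_filter_of_support_subset _ subset_rfl]
    _ ≤ ∑ k, μ k * wnorm N1 N2 σ (x k) := sum_le_sum fun k _ => mul_le_mul_of_nonneg_left
        (dotp_le_wnorm_of_eq_zero_or ((hμ.prop k).imp_right (⟨w, ·⟩)) _) (hμ.nonneg k)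
    _ ≤ √(∑ k, μ k ^ 2) * √(∑ k, wnorm N1 N2 σ (x k) ^ 2) := Real.sum_mul_le_sqrt_mul_sqrt _ _ _
    _ ≤ √(∑ k, wnorm N1 N2 σ (x k) ^ 2) :=
        mul_le_of_le_one_left (Real.sqrt_nonneg _) (Real.sqrt_le_one.2 hμ.sum_sq_le_one)

lemma exists_dotp_ge_wnorm_sub (x : ℕ →₀ ℝ) {ε : ℝ} (hε : 0 < ε) :
    ∃ g, (g = 0 ∨ DWh N1 N2 σ g) ∧ g.support ⊆ x.support ∧
      max (wnorm N1 N2 σ x - ε) 0 ≤ dotp g x := by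
  by_cases hx : wnorm N1 N2 σ x - ε ≤ 0
  · exact ⟨0, .inl rfl, by simp, by simp [hx]⟩
  obtain ⟨_, ⟨f, ⟨w, hf⟩, rfl⟩, hlt⟩ := exists_lt_of_lt_csSup (nonempty_dotp x) (sub_lt_self _ hε)
  refine ⟨f.filter (· ∈ x.support), (hf.filter _).imp_right (⟨w, ·⟩),
    fun n hn => (mem_filter.1 hn).2, ?_⟩
  rw [max_eq_left (not_le.1 hx).le, dotp_filter_of_support_subset _ subset_rfl]
  exact hlt.le

lemma sqrt_sum_sq_le_two_mul_wnorm {d : ℕ} {x : Fin d → ℕ →₀ ℝ}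
    (hx : Pairwise (Disjoint on fun k => (x k).support))
    (hmin : ∀ k : Fin d, ∀ a ∈ (x k).support, d ≤ a) {g : Fin d → ℕ →₀ ℝ}
    (hg : ∀ k, g k = 0 ∨ DWh N1 N2 σ (g k)) (hgx : ∀ k, (g k).support ⊆ (x k).support)
    {a : Fin d → ℝ} (ha : ∀ k, 0 ≤ a k) (hag : ∀ k, a k ≤ dotp (g k) (x k)) :
    √(∑ k, a k ^ 2) ≤ 2 * wnorm N1 N2 σ (∑ k, x k) := by
  set S := √(∑ k, a k ^ 2)
  by_cases hS : S = 0
  · rw [hS]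
    exact mul_nonneg zero_le_two (wnorm_nonneg _)
  have hallow : (univ.filter (g · ≠ 0)).image (fun k => minsupp (g k)) ∈ SchreierOne := by
    intro m hm
    obtain ⟨k, hk, rfl⟩ := mem_image.1 hm
    replace hk := (mem_filter.1 hk).2
    calc _ ≤ (univ.filter (g · ≠ 0)).card := card_image_le
      _ ≤ d := (card_filter_le _ _).trans (card_fin d).le
      _ ≤ _ := hmin k _ (hgx k (minsupp_mem hk))
  have hF := DW.even_of_ne_zero (N1 := N1) (N2 := N2) (σ := σ) 0 (fun k => S⁻¹ * a k) hg
    (fun k k' hkk' => (hx hkk').mono (hgx k) (hgx k')) hallow (sum_sq_inv_sqrt_mul_le_one _ _)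
  have hgx' : ∀ k, dotp (g k) (∑ k', x k') = dotp (g k) (x k) := fun k => by
    rw [dotp_sum_right, sum_eq_single k (fun k' _ hk' => dotp_eq_zero_of_disjoint
      ((hx hk'.symm).mono_left (hgx k))) (by simp)]
  calc S = 2 * (2⁻¹ * ∑ k, S⁻¹ * a k * a k) := by
        have hsum : ∑ k, a k ^ 2 = S ^ 2 := (Real.sq_sqrt (sum_nonneg fun k _ => sq_nonneg _)).symm
        simp_rw [mul_assoc, ← mul_sum, ← sq, hsum]
        field_simp
    _ ≤ 2 * (2⁻¹ * ∑ k, S⁻¹ * a k * dotp (g k) (x k)) := by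
        gcongr with k
        exacts [mul_nonneg (inv_nonneg.2 (Real.sqrt_nonneg _)) (ha k), hag k]
    _ = 2 * dotp (((mseq (2 * 0) : ℕ) : ℝ)⁻¹ • ∑ k, (S⁻¹ * a k) • g k) (∑ k, x k) := by
        have hm : ((mseq (2 * 0) : ℕ) : ℝ) = 2 := by norm_num [mseq]
        simp only [dotp_smul_left, dotp_sum_left, hgx', hm, mul_assoc]
    _ ≤ 2 * wnorm N1 N2 σ (∑ k, x k) := by gcongr; exact dotp_le_wnorm ⟨_, hF⟩ _

theorem sqrt_sum_sq_wnorm_le_two_mul {d : ℕ} {x : Fin d → ℕ →₀ ℝ}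
    (hx : Pairwise (Disjoint on fun k => (x k).support))
    (hmin : ∀ k : Fin d, ∀ a ∈ (x k).support, d ≤ a) :
    √(∑ k, wnorm N1 N2 σ (x k) ^ 2) ≤ 2 * wnorm N1 N2 σ (∑ k, x k) := by
  have hε : ∀ ε > 0,
      √(∑ k, max (wnorm N1 N2 σ (x k) - ε) 0 ^ 2) ≤ 2 * wnorm N1 N2 σ (∑ k, x k) := by
    intro ε hε
    choose g hg hgx hag using fun k =>
      exists_dotp_ge_wnorm_sub (N1 := N1) (N2 := N2) (σ := σ) (x k) hε
    exact sqrt_sum_sq_le_two_mul_wnorm hx hmin hg hgx (fun k => le_max_right _ _) hag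
  have hlim : Filter.Tendsto (fun ε => √(∑ k, max (wnorm N1 N2 σ (x k) - ε) 0 ^ 2))
      (nhdsWithin 0 (Set.Ioi 0)) (nhds √(∑ k, wnorm N1 N2 σ (x k) ^ 2)) := by
    have hc : Continuous fun ε : ℝ => √(∑ k, max (wnorm N1 N2 σ (x k) - ε) 0 ^ 2) := by fun_prop
    simpa [max_eq_left (wnorm_nonneg _)] using (hc.tendsto 0).mono_left nhdsWithin_le_nhds
  exact le_of_tendsto hlim (eventually_nhdsWithin_of_forall hε)

end Estimates

theorem lower_ell2_estimate_general (N1 N2 : Set ℕ) (σ : List (Finset ℕ × ℕ) → ℕ)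
    (d : ℕ) (x : Fin d → ℕ →₀ ℝ)
    (hx : ∀ k k', k ≠ k' → Disjoint (x k).support (x k').support)
    (hmin : ∀ k : Fin d, ∀ a ∈ (x k).support, d ≤ a) :
    (1 / 2) * Real.sqrt (∑ k, (wnorm N1 N2 σ (x k)) ^ 2) ≤ wnorm N1 N2 σ (∑ k, x k) ∧
    wnorm N1 N2 σ (∑ k, x k) ≤ Real.sqrt (∑ k, (wnorm N1 N2 σ (x k)) ^ 2) := by
  have hx' : Pairwise (Disjoint on fun k => (x k).support) := fun k k' => hx k k'
  exact ⟨by linarith [sqrt_sum_sq_wnorm_le_two_mul (N1 := N1) (N2 := N2) (σ := σ) hx' hmin],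
    wnorm_sum_le_sqrt hx'⟩

/-- In `X_wh`, for every sequence `(x_k)_{k=1}^d` of disjointly
supported vectors with `d ≤ min supp x_k` for each `k`, one has
`(1/2)(∑ ‖x_k‖^2)^{1/2} ≤ ‖∑ x_k‖`.  Combined with the upper `ℓ_2` estimate
`‖∑ x_k‖ ≤ (∑ ‖x_k‖^2)^{1/2}`, the basis of `X_wh` is asymptotic `ℓ_2` for vectors with
disjoint supports, with constant 2. -/
theorem lower_ell2_estimate (N1 N2 : Set ℕ) (σ : List (Finset ℕ × ℕ) → ℕ)
    (hN : N1 ∪ N2 = Set.univ) (hN1 : N1.Infinite) (hN2 : N2.Infinite)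
    (hσ : GoodCoding N1 N2 σ)
    (d : ℕ) (x : Fin d → ℕ →₀ ℝ)
    (hx : ∀ k k', k ≠ k' → Disjoint (x k).support (x k').support)
    (hmin : ∀ k : Fin d, ∀ a ∈ (x k).support, d ≤ a) :
    (1 / 2) * Real.sqrt (∑ k, (wnorm N1 N2 σ (x k)) ^ 2) ≤ wnorm N1 N2 σ (∑ k, x k) ∧
    wnorm N1 N2 σ (∑ k, x k) ≤ Real.sqrt (∑ k, (wnorm N1 N2 σ (x k)) ^ 2) :=
  lower_ell2_estimate_general N1 N2 σ d x hx hmin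
end

section
/- Let T be a bounded diagonal-free operator on a block subspace Y of a Banach space with basis (y_n) (i.e., y_n^*(T y_n) = 0 for all n), and let x be a finitely supported vector with support A of even cardinality 2L. Let P = {(B,C) : B ∪ C = A, B ∩ C = ∅, |B| = L}. Then A T x = (2L(2L-1)/L^2) · (1/|P|) · ∑_{(B,C) ∈ P} B T C x, where for a set E, E denotes the coordinate projection onto E. -/
open Finset

lemma nat_choose_id (M : ℕ) :
    (M+1)^2 * Nat.choose (2*M+2) (M+1) = (2*M+2) * (2*M+1) * Nat.choose (2*M) M := by
  have h1 := Nat.add_one_mul_choose_eq (2*M+1) M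
  have h2 := Nat.add_one_mul_choose_eq (2*M) M
  have h3 : (2*M+1).choose (M+1) = (2*M+1).choose M := by
    rw [← Nat.choose_symm (by omega : M ≤ 2*M+1)]
    congr 1; omega
  calc (M+1)^2 * Nat.choose (2*M+2) (M+1)
      = (M+1) * (Nat.choose (2*M+2) (M+1) * (M+1)) := by ring
    _ = (M+1) * ((2*M+1+1) * (2*M+1).choose M) := by rw [h1]
    _ = (2*M+2) * ((2*M+1).choose (M+1) * (M+1)) := by rw [h3]; ring
    _ = (2*M+2) * ((2*M+1) * (2*M).choose M) := by rw [h2]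
    _ = (2*M+2) * (2*M+1) * Nat.choose (2*M) M := by ring

lemma count_aux (A : Finset ℕ) (L : ℕ) (hL : 0 < L) {n k : ℕ} (hn : n ∈ A) (hk : k ∈ A)
    (hnk : n ≠ k) :
    ((Finset.powersetCard L A).filter fun B => n ∈ B ∧ k ∉ B).card
      = ((A.erase n).erase k).card.choose (L-1) := by
  rw [← Finset.card_powersetCard]
  apply Finset.card_bij (fun B _ => B.erase n)
  · intro B hB
    simp only [mem_filter, Finset.mem_powersetCard] at hB
    obtain ⟨⟨hBA, hBc⟩, hnB, hkB⟩ := hB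
    rw [Finset.mem_powersetCard]
    constructor
    · intro x hx
      simp only [Finset.mem_erase] at hx ⊢
      exact ⟨fun h => hkB (h ▸ hx.2), hx.1, hBA hx.2⟩
    · rw [Finset.card_erase_of_mem hnB, hBc]
  · intro B hB B' hB' h
    simp only [mem_filter, Finset.mem_powersetCard] at hB hB'
    rw [← Finset.insert_erase hB.2.1, ← Finset.insert_erase hB'.2.1, h]
  · intro C hC
    rw [Finset.mem_powersetCard] at hC
    obtain ⟨hCA, hCc⟩ := hC
    have hnC : n ∉ C := fun h => (Finset.mem_erase.1 (Finset.mem_erase.1 (hCA h)).2).1 rfl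
    refine ⟨insert n C, ?_, ?_⟩
    · simp only [mem_filter, Finset.mem_powersetCard]
      refine ⟨⟨?_, ?_⟩, Finset.mem_insert_self n C, ?_⟩
      · intro x hx
        rcases Finset.mem_insert.1 hx with h | h
        · exact h ▸ hn
        · exact Finset.mem_of_mem_erase (Finset.mem_of_mem_erase (hCA h))
      · rw [Finset.card_insert_of_notMem hnC, hCc]; omega
      · intro hkI
        rcases Finset.mem_insert.1 hkI with h | h
        · exact hnk h.symm
        · exact (Finset.mem_erase.1 (hCA h)).1 rfl
    · rw [Finset.erase_insert hnC]


/-- Let `T` be a bounded diagonal-free operator on (a block subspace of)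
a Banach space with basis `(y_n)` and biorthogonal functionals `(y_n^*)`
(i.e. `y_n^*(T y_n) = 0` for all `n`), and let `x = ∑_{k∈A} a_k y_k` with `|A| = 2L`.
With `P` the collection of balanced partitions `(B, A\B)` of `A` (`|B| = L`), and `E`
denoting the coordinate projection onto a set `E`, one has
`A T x = (2L(2L-1)/L^2) · (1/|P|) · ∑_{(B,C) ∈ P} B T C x`. -/
theorem diagonal_free_counting
    {X : Type*} [NormedAddCommGroup X] [NormedSpace ℝ X]
    (y : ℕ → X) (ystar : ℕ → X →L[ℝ] ℝ)
    (hbi : ∀ n m, ystar n (y m) = if n = m then 1 else 0)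
    (T : X →L[ℝ] X)
    (hdf : ∀ n, ystar n (T (y n)) = 0)
    (A : Finset ℕ) (L : ℕ) (hL : 0 < L) (hA : A.card = 2 * L)
    (a : ℕ → ℝ) (x : X) (hx : x = ∑ k ∈ A, a k • y k) :
    -- the coordinate projection onto a finite set of coordinates
    (∀ proj : Finset ℕ → X → X,
      (∀ E z, proj E z = ∑ k ∈ E, ystar k z • y k) →
      proj A (T x) =
        (((2 * L * (2 * L - 1) : ℝ)) / (L : ℝ) ^ 2) •
          (((A.powerset.filter fun B => B.card = L).card : ℝ)⁻¹ •
            ∑ B ∈ A.powerset.filter (fun B => B.card = L),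
              proj B (T (proj (A \ B) x)))) := by
  intro proj hproj
  set f : ℕ → ℕ → X := fun n k => (a k * ystar n (T (y k))) • y n with hf
  have hfdiag : ∀ n, f n n = 0 := by intro n; simp [hf, hdf n]
  set N : ℕ := (2*L-2).choose (L-1) with hN
  set S : X := ∑ n ∈ A, ∑ k ∈ A, f n k with hS
  -- coordinates of x
  have hyx : ∀ k ∈ A, ystar k x = a k := by
    intro k hk
    rw [hx, map_sum]
    rw [Finset.sum_eq_single k]
    · simp [hbi]
    · intro j hj hjk
      simp [hbi, hjk, Ne.symm hjk]
    · intro h; exact absurd hk h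
  -- LHS
  have hLHS : proj A (T x) = S := by
    rw [hproj, hx, hS]
    refine Finset.sum_congr rfl fun n _ => ?_
    rw [map_sum, map_sum, Finset.sum_smul]
    refine Finset.sum_congr rfl fun k _ => ?_
    simp [hf, smul_smul]
  -- rewrite the partition family
  have hPfilter : (A.powerset.filter fun B => B.card = L) = Finset.powersetCard L A :=
    Finset.powersetCard_eq_filter.symm
  -- each summand
  have hstep : ∀ B ∈ Finset.powersetCard L A,
      proj B (T (proj (A \ B) x)) =
        ∑ n ∈ A, ∑ k ∈ A, if n ∈ B ∧ k ∉ B then f n k else 0 := by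
    intro B hB
    rw [Finset.mem_powersetCard] at hB
    have h1 : proj B (T (proj (A \ B) x)) = ∑ n ∈ B, ∑ k ∈ A \ B, f n k := by
      rw [hproj, hproj]
      refine Finset.sum_congr rfl fun n _ => ?_
      have : (∑ k ∈ A \ B, ystar k x • y k) = ∑ k ∈ A \ B, a k • y k :=
        Finset.sum_congr rfl fun k hk => by rw [hyx k (Finset.mem_sdiff.1 hk).1]
      rw [this, map_sum, map_sum, Finset.sum_smul]
      refine Finset.sum_congr rfl fun k _ => ?_
      simp [hf, smul_smul]
    rw [h1]
    have hBeq : B = A.filter (· ∈ B) := by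
      rw [Finset.filter_mem_eq_inter, Finset.inter_eq_right.2 hB.1]
    have hsd : A \ B = A.filter (· ∉ B) := Finset.sdiff_eq_filter A B
    calc ∑ n ∈ B, ∑ k ∈ A \ B, f n k
        = ∑ n ∈ A.filter (· ∈ B), ∑ k ∈ A.filter (· ∉ B), f n k := by rw [← hBeq, ← hsd]
      _ = ∑ n ∈ A, if n ∈ B then ∑ k ∈ A, (if k ∉ B then f n k else 0) else 0 := by
          rw [Finset.sum_filter]
          exact Finset.sum_congr rfl fun n _ => by
            split_ifs with h
            · rw [Finset.sum_filter]
            · rfl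
      _ = ∑ n ∈ A, ∑ k ∈ A, if n ∈ B ∧ k ∉ B then f n k else 0 := by
          refine Finset.sum_congr rfl fun n _ => ?_
          split_ifs with h
          · exact Finset.sum_congr rfl fun k _ => by simp [h]
          · simp [h]
  -- the full sum
  have hsum : ∑ B ∈ Finset.powersetCard L A, proj B (T (proj (A \ B) x)) = N • S := by
    have hpt : ∀ n ∈ A, ∀ k ∈ A,
        (∑ B ∈ Finset.powersetCard L A, if n ∈ B ∧ k ∉ B then f n k else 0) = N • f n k := by
      intro n hn k hk
      rw [← Finset.sum_filter, Finset.sum_const]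
      by_cases hnk : n = k
      · subst hnk
        rw [hfdiag, smul_zero, smul_zero]
      · rw [count_aux A L hL hn hk hnk]
        congr 2
        rw [Finset.card_erase_of_mem (Finset.mem_erase.2 ⟨Ne.symm hnk, hk⟩),
          Finset.card_erase_of_mem hn, hA]
        omega
    calc ∑ B ∈ Finset.powersetCard L A, proj B (T (proj (A \ B) x))
        = ∑ B ∈ Finset.powersetCard L A, ∑ n ∈ A, ∑ k ∈ A,
            (if n ∈ B ∧ k ∉ B then f n k else 0) := Finset.sum_congr rfl hstep
      _ = ∑ n ∈ A, ∑ B ∈ Finset.powersetCard L A, ∑ k ∈ A,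
            (if n ∈ B ∧ k ∉ B then f n k else 0) := Finset.sum_comm
      _ = ∑ n ∈ A, ∑ k ∈ A, ∑ B ∈ Finset.powersetCard L A,
            (if n ∈ B ∧ k ∉ B then f n k else 0) :=
          Finset.sum_congr rfl fun n _ => Finset.sum_comm
      _ = ∑ n ∈ A, ∑ k ∈ A, N • f n k := by
          refine Finset.sum_congr rfl fun n hn => Finset.sum_congr rfl fun k hk => ?_
          exact hpt n hn k hk
      _ = N • S := by
          rw [hS, Finset.smul_sum]
          exact Finset.sum_congr rfl fun n _ => (Finset.smul_sum).symm
  -- put it together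
  rw [hLHS, hPfilter, hsum, Finset.card_powersetCard, hA]
  rw [← Nat.cast_smul_eq_nsmul ℝ N S, smul_smul, smul_smul]
  -- scalar identity
  obtain ⟨M, rfl⟩ : ∃ M, L = M + 1 := ⟨L - 1, by omega⟩
  have hNv : N = (2*M).choose M := by rw [hN]; congr 1 <;> omega
  have hCe : (2*(M+1)).choose (M+1) = (2*M+2).choose (M+1) := by congr 1
  have hpos : (0:ℝ) < ((2*M+2).choose (M+1) : ℝ) := by
    exact_mod_cast Nat.choose_pos (by omega : M + 1 ≤ 2*M+2)
  have hidR : ((M:ℝ)+1)^2 * ((2*M+2).choose (M+1) : ℝ)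
      = (2*(M:ℝ)+2) * (2*(M:ℝ)+1) * ((2*M).choose M : ℝ) := by exact_mod_cast nat_choose_id M
  have hscalar : (2 * ((M+1:ℕ):ℝ) * (2 * ((M+1:ℕ):ℝ) - 1) / ((M+1:ℕ):ℝ) ^ 2 *
      ((((2*(M+1)).choose (M+1) : ℕ) : ℝ))⁻¹ * (N : ℝ)) = 1 := by
    rw [hCe, hNv]
    push_cast
    have hM : ((M:ℝ)+1) ≠ 0 := by positivity
    field_simp
    nlinarith [hidR]
  rw [hscalar, one_smul]
end
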